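/- arXiv:2408.11193 — 6 statements merged into one kernel-verified Lean document; each statement's English description precedes it below -/
import Mathlib

section
/- Let K be a positive multiple of 4 and let s, β, h be real numbers. Suppose the K judges are split into four groups of K/4 judges each, where on the four groups the pair (π_k, π_{Yk}) equals (−s, −sβ+h), (−s/2, −(1/2)sβ−h), (s/2, (1/2)sβ−h), and (s, sβ+h) respectively. Then for every real β₀, Σ_{k=1}^{K} (π_{Yk} − β₀ π_k)² = (5/8)·K·s²·(β−β₀)² + K·h². Consequently, if h ≠ 0 then for every real β₀ and every real c > 1 the quantity ((c−1)/√K)·Σ_{k=1}^{K}(π_{Yk} − β₀π_k)², which equals the mean E[T_AR] of the leave-one-out Anderson–Rubin statistic in the judge model with c cases per judge, is strictly positive; in particular E[T_AR] ≠ 0 for all real β₀. -/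
/-- In the judge model with `K = 4*m` judges split into four groups of
`m` judges each, with `(π_k, π_{Yk})` taking the four pairs of values
`(-s, -sβ+h)`, `(-s/2, -(1/2)sβ-h)`, `(s/2, (1/2)sβ-h)`, `(s, sβ+h)`, we have for
every `β₀` that `Σ_k (π_{Yk} - β₀ π_k)² = (5/8)·K·s²·(β-β₀)² + K·h²`; consequently
if `h ≠ 0` then for every `β₀` and every `c > 1` the mean
`E[T_AR] = ((c-1)/√K)·Σ_k (π_{Yk} - β₀ π_k)²` is strictly positive, in particular
nonzero. -/
theorem stmt_0 (m : ℕ) (hm : 0 < m) (s β h : ℝ)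
    (π πY : Fin 4 × Fin m → ℝ)
    (hπ0 : ∀ j : Fin m, π (0, j) = -s) (hπ1 : ∀ j : Fin m, π (1, j) = -s / 2)
    (hπ2 : ∀ j : Fin m, π (2, j) = s / 2) (hπ3 : ∀ j : Fin m, π (3, j) = s)
    (hπY0 : ∀ j : Fin m, πY (0, j) = -s * β + h)
    (hπY1 : ∀ j : Fin m, πY (1, j) = -(1 / 2) * s * β - h)
    (hπY2 : ∀ j : Fin m, πY (2, j) = (1 / 2) * s * β - h)
    (hπY3 : ∀ j : Fin m, πY (3, j) = s * β + h) :
    (∀ β₀ : ℝ, ∑ k : Fin 4 × Fin m, (πY k - β₀ * π k) ^ 2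
        = (5 / 8) * (4 * m : ℝ) * s ^ 2 * (β - β₀) ^ 2 + (4 * m : ℝ) * h ^ 2) ∧
    (h ≠ 0 → ∀ β₀ c : ℝ, 1 < c →
      0 < ((c - 1) / Real.sqrt (4 * m : ℝ)) *
            ∑ k : Fin 4 × Fin m, (πY k - β₀ * π k) ^ 2 ∧
      ((c - 1) / Real.sqrt (4 * m : ℝ)) *
            ∑ k : Fin 4 × Fin m, (πY k - β₀ * π k) ^ 2 ≠ 0) := by

  have key : ∀ β₀ : ℝ, ∑ k : Fin 4 × Fin m, (πY k - β₀ * π k) ^ 2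
      = (5 / 8) * (4 * m : ℝ) * s ^ 2 * (β - β₀) ^ 2 + (4 * m : ℝ) * h ^ 2 := by
    intro β₀
    rw [Fintype.sum_prod_type, Fin.sum_univ_four]
    simp only [hπ0, hπ1, hπ2, hπ3, hπY0, hπY1, hπY2, hπY3,
      Finset.sum_const, Finset.card_univ, Fintype.card_fin, nsmul_eq_mul]
    ring
  refine ⟨key, fun hh β₀ c hc => ?_⟩
  have hsum : 0 < ∑ k : Fin 4 × Fin m, (πY k - β₀ * π k) ^ 2 := by
    rw [key β₀]
    have h1 : 0 ≤ (5 / 8) * (4 * m : ℝ) * s ^ 2 * (β - β₀) ^ 2 := by positivity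
    have h2 : 0 < (4 * m : ℝ) * h ^ 2 := by positivity
    linarith
  have hK : (0:ℝ) < Real.sqrt (4 * m) := Real.sqrt_pos.mpr (by positivity)
  have hpos : 0 < ((c - 1) / Real.sqrt (4 * m : ℝ)) *
      ∑ k : Fin 4 × Fin m, (πY k - β₀ * π k) ^ 2 :=
    mul_pos (div_pos (by linarith) hK) hsum
  exact ⟨hpos, ne_of_gt hpos⟩
end

section
/- Let W be a finite set; for each w ∈ W let Q_w be a finite set, let n_q > 0 be a real weight for each q ∈ Q_w, and set n_w := Σ_{q∈Q_w} n_q, assumed to satisfy n_w > 1. Let π_q, π_{Y,q} be reals for each q, and γ_w, δ_w reals for each w; put R_q := π_q + γ_w and R_{Y,q} := π_{Y,q} + δ_w for q ∈ Q_w. Define μ₃ := Σ_{w∈W} [ Σ_{q∈Q_w} n_q R_q² − (1/(n_w−1))·( Σ_{q∈Q_w} n_q(n_q−1) R_q² + Σ_{q≠q'∈Q_w} n_q n_{q'} R_q R_{q'} ) ], define μ₁ in the same way with R_{Y,q} in place of R_q, and define μ₂ in the same way with R_q R_{Y,q} in place of R_q² and R_q R_{Y,q'} in place of R_q R_{q'}.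 Then μ₃ = Σ_w (1/(2(n_w−1))) Σ_{q≠q'∈Q_w} n_q n_{q'} (π_q − π_{q'})² ≥ 0, μ₁ = Σ_w (1/(2(n_w−1))) Σ_{q≠q'∈Q_w} n_q n_{q'} (π_{Y,q} − π_{Y,q'})² ≥ 0, μ₂ = Σ_w (1/(2(n_w−1))) Σ_{q≠q'∈Q_w} n_q n_{q'} (π_q − π_{q'})(π_{Y,q} − π_{Y,q'}), and μ₂² ≤ μ₁·μ₃. -/
open Finset

/-- The generic cell-level UJIVE mean: for cell weights `n` and cell-level mean
vectors `A`, `B`,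
`Σ_w [ Σ_q n_q A_q B_q − (1/(n_w−1))·( Σ_q n_q(n_q−1) A_q B_q
        + Σ_{q≠q'} n_q n_{q'} A_q B_{q'} ) ]`. -/
noncomputable def ujiveMu {W : Type*} [Fintype W] (Q : W → Type*) [∀ w, Fintype (Q w)] [∀ w, DecidableEq (Q w)]
    (n : ∀ w, Q w → ℝ) (A B : ∀ w, Q w → ℝ) : ℝ :=
  ∑ w, (∑ q, n w q * A w q * B w q
    - (1 / (∑ q, n w q - 1)) *
      (∑ q, n w q * (n w q - 1) * A w q * B w q
        + ∑ q, ∑ q' ∈ Finset.univ.erase q, n w q * n w q' * A w q * B w q'))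

lemma grp {Q : Type*} [Fintype Q] [DecidableEq Q] (n A B : Q → ℝ)
    (hS : (∑ q, n q) ≠ 1) :
    ∑ q, n q * A q * B q - (1 / (∑ q, n q - 1)) *
      (∑ q, n q * (n q - 1) * A q * B q
        + ∑ q, ∑ q' ∈ Finset.univ.erase q, n q * n q' * A q * B q')
    = (1 / (2 * (∑ q, n q - 1))) *
      ∑ q, ∑ q', n q * n q' * (A q - A q') * (B q - B q') := by
  have hS' : (∑ q, n q) - 1 ≠ 0 := sub_ne_zero.mpr hS
  set S := ∑ q, n q with hSdef
  set P := ∑ q, n q * A q * B q with hP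
  set U := ∑ q, n q * A q with hU
  set V := ∑ q, n q * B q with hV
  set X := ∑ q, n q * n q * A q * B q with hX
  have h1 : ∑ q, ∑ q' ∈ Finset.univ.erase q, n q * n q' * A q * B q' = U * V - X := by
    have hstep : ∀ q : Q, ∑ q' ∈ Finset.univ.erase q, n q * n q' * A q * B q'
        = (∑ q', n q * n q' * A q * B q') - n q * n q * A q * B q := fun q =>
      Finset.sum_erase_eq_sub (Finset.mem_univ q)
    rw [Finset.sum_congr rfl fun q _ => hstep q, Finset.sum_sub_distrib]
    congr 1
    rw [hU, hV, Finset.sum_mul_sum]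
    exact Finset.sum_congr rfl fun q _ => Finset.sum_congr rfl fun q' _ => by ring
  have h2 : ∑ q, n q * (n q - 1) * A q * B q = X - P := by
    rw [hX, hP, ← Finset.sum_sub_distrib]
    exact Finset.sum_congr rfl fun q _ => by ring
  have h3 : ∑ q, ∑ q', n q * n q' * (A q - A q') * (B q - B q') = 2 * (S * P - U * V) := by
    have inner : ∀ q : Q, ∑ q', n q * n q' * (A q - A q') * (B q - B q')
        = n q * A q * B q * S + n q * P - n q * A q * V - n q * B q * U := by
      intro q
      calc ∑ q', n q * n q' * (A q - A q') * (B q - B q')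
          = ∑ q', (n q * A q * B q * n q' + n q * (n q' * A q' * B q')
              - n q * A q * (n q' * B q') - n q * B q * (n q' * A q')) :=
            Finset.sum_congr rfl fun q' _ => by ring
        _ = n q * A q * B q * S + n q * P - n q * A q * V - n q * B q * U := by
            rw [Finset.sum_sub_distrib, Finset.sum_sub_distrib, Finset.sum_add_distrib,
              ← Finset.mul_sum, ← Finset.mul_sum, ← Finset.mul_sum, ← Finset.mul_sum,
              ← hSdef, ← hP, ← hV, ← hU]
    calc ∑ q, ∑ q', n q * n q' * (A q - A q') * (B q - B q')
        = ∑ q, (n q * A q * B q * S + n q * P - n q * A q * V - n q * B q * U) :=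
          Finset.sum_congr rfl fun q _ => inner q
      _ = (∑ q, n q * A q * B q) * S + (∑ q, n q) * P - (∑ q, n q * A q) * V
            - (∑ q, n q * B q) * U := by
          rw [Finset.sum_sub_distrib, Finset.sum_sub_distrib, Finset.sum_add_distrib,
            ← Finset.sum_mul, ← Finset.sum_mul, ← Finset.sum_mul, ← Finset.sum_mul]
      _ = 2 * (S * P - U * V) := by rw [← hP, ← hSdef, ← hU, ← hV]; ring
  rw [h1, h2, h3]
  field_simp
  ring

lemma eraseFull {Q : Type*} [Fintype Q] [DecidableEq Q] (F : Q → Q → ℝ)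
    (h : ∀ q, F q q = 0) :
    ∑ q, ∑ q' ∈ Finset.univ.erase q, F q q' = ∑ q, ∑ q', F q q' := by
  refine Finset.sum_congr rfl fun q _ => ?_
  rw [Finset.sum_erase_eq_sub (Finset.mem_univ q), h, sub_zero]

/-- In the fully saturated UJIVE setting, with `R_q = π_q + γ_w` and
`R_{Y,q} = π_{Y,q} + δ_w`, the means `μ₃ = ujiveMu n R R`, `μ₁ = ujiveMu n R_Y R_Y`,
`μ₂ = ujiveMu n R R_Y` equal the displayed sums of pairwise differences of the
instrument coefficients, `μ₁ ≥ 0`, `μ₃ ≥ 0`, and `μ₂² ≤ μ₁·μ₃`. -/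
theorem stmt_4 {W : Type*} [Fintype W] (Q : W → Type*) [∀ w, Fintype (Q w)] [∀ w, DecidableEq (Q w)]
    (n π πY : ∀ w, Q w → ℝ) (γ δ : W → ℝ)
    (hn : ∀ w q, 0 < n w q) (hnw : ∀ w, 1 < ∑ q, n w q) :
    let R : ∀ w, Q w → ℝ := fun w q => π w q + γ w
    let RY : ∀ w, Q w → ℝ := fun w q => πY w q + δ w
    let μ₃ := ujiveMu Q n R R
    let μ₁ := ujiveMu Q n RY RY
    let μ₂ := ujiveMu Q n R RY
    (μ₃ = ∑ w, (1 / (2 * (∑ q, n w q - 1))) *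
        ∑ q, ∑ q' ∈ Finset.univ.erase q, n w q * n w q' * (π w q - π w q') ^ 2) ∧
    (0 ≤ μ₃) ∧
    (μ₁ = ∑ w, (1 / (2 * (∑ q, n w q - 1))) *
        ∑ q, ∑ q' ∈ Finset.univ.erase q, n w q * n w q' * (πY w q - πY w q') ^ 2) ∧
    (0 ≤ μ₁) ∧
    (μ₂ = ∑ w, (1 / (2 * (∑ q, n w q - 1))) *
        ∑ q, ∑ q' ∈ Finset.univ.erase q,
          n w q * n w q' * (π w q - π w q') * (πY w q - πY w q')) ∧
    μ₂ ^ 2 ≤ μ₁ * μ₃ := by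
  intro R RY μ₃ μ₁ μ₂
  have hne : ∀ w, (∑ q, n w q) ≠ 1 := fun w => (hnw w).ne'
  have key : ∀ (A B C D : ∀ w, Q w → ℝ),
      (∀ w q q', A w q - A w q' = C w q - C w q') →
      (∀ w q q', B w q - B w q' = D w q - D w q') →
      ujiveMu Q n A B = ∑ w, (1 / (2 * (∑ q, n w q - 1))) *
        ∑ q, ∑ q', n w q * n w q' * ((C w q - C w q') * (D w q - D w q')) := by
    intro A B C D hC hD
    unfold ujiveMu
    refine Finset.sum_congr rfl fun w _ => ?_
    rw [grp (n w) (A w) (B w) (hne w)]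
    congr 1
    exact Finset.sum_congr rfl fun q _ => Finset.sum_congr rfl fun q' _ => by
      rw [hC, hD]; ring
  have hdR : ∀ w (q q' : Q w), R w q - R w q' = π w q - π w q' := by
    intro w q q'; show (π w q + γ w) - (π w q' + γ w) = _; ring
  have hdRY : ∀ w (q q' : Q w), RY w q - RY w q' = πY w q - πY w q' := by
    intro w q q'; show (πY w q + δ w) - (πY w q' + δ w) = _; ring
  have e3 : μ₃ = ∑ w, (1 / (2 * (∑ q, n w q - 1))) *
      ∑ q, ∑ q', n w q * n w q' * ((π w q - π w q') * (π w q - π w q')) :=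
    key R R π π hdR hdR
  have e1 : μ₁ = ∑ w, (1 / (2 * (∑ q, n w q - 1))) *
      ∑ q, ∑ q', n w q * n w q' * ((πY w q - πY w q') * (πY w q - πY w q')) :=
    key RY RY πY πY hdRY hdRY
  have e2 : μ₂ = ∑ w, (1 / (2 * (∑ q, n w q - 1))) *
      ∑ q, ∑ q', n w q * n w q' * ((π w q - π w q') * (πY w q - πY w q')) :=
    key R RY π πY hdR hdRY
  -- Cauchy–Schwarz setup over the sigma type
  have hc : ∀ (x : Σ w : W, Q w × Q w),
      0 ≤ n x.1 x.2.1 * n x.1 x.2.2 / (2 * (∑ q, n x.1 q - 1)) := by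
    intro x
    apply div_nonneg (mul_nonneg (hn _ _).le (hn _ _).le)
    have := hnw x.1; linarith
  set f : (Σ w : W, Q w × Q w) → ℝ := fun x =>
    Real.sqrt (n x.1 x.2.1 * n x.1 x.2.2 / (2 * (∑ q, n x.1 q - 1)))
      * (π x.1 x.2.1 - π x.1 x.2.2) with hf
  set g : (Σ w : W, Q w × Q w) → ℝ := fun x =>
    Real.sqrt (n x.1 x.2.1 * n x.1 x.2.2 / (2 * (∑ q, n x.1 q - 1)))
      * (πY x.1 x.2.1 - πY x.1 x.2.2) with hg
  have sigma_eq : ∀ (F : ∀ w, Q w → Q w → ℝ),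
      ∑ w, (1 / (2 * (∑ q, n w q - 1))) * ∑ q, ∑ q', n w q * n w q' * F w q q'
      = ∑ x : Σ w : W, Q w × Q w,
          (n x.1 x.2.1 * n x.1 x.2.2 / (2 * (∑ q, n x.1 q - 1))) * F x.1 x.2.1 x.2.2 := by
    intro F
    rw [show (Finset.univ : Finset (Σ w : W, Q w × Q w))
        = Finset.univ.sigma (fun _ => Finset.univ) from (Finset.univ_sigma_univ).symm,
      Finset.sum_sigma]
    refine Finset.sum_congr rfl fun w _ => ?_
    rw [Fintype.sum_prod_type, Finset.mul_sum]
    refine Finset.sum_congr rfl fun q _ => ?_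
    rw [Finset.mul_sum]
    exact Finset.sum_congr rfl fun q' _ => by ring
  have h3' : μ₃ = ∑ x, f x ^ 2 := by
    rw [e3, sigma_eq (fun w q q' => (π w q - π w q') * (π w q - π w q'))]
    refine Finset.sum_congr rfl fun x _ => ?_
    rw [hf]
    rw [mul_pow, Real.sq_sqrt (hc x)]
    ring
  have h1' : μ₁ = ∑ x, g x ^ 2 := by
    rw [e1, sigma_eq (fun w q q' => (πY w q - πY w q') * (πY w q - πY w q'))]
    refine Finset.sum_congr rfl fun x _ => ?_
    rw [hg]
    rw [mul_pow, Real.sq_sqrt (hc x)]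
    ring
  have h2' : μ₂ = ∑ x, f x * g x := by
    rw [e2, sigma_eq (fun w q q' => (π w q - π w q') * (πY w q - πY w q'))]
    refine Finset.sum_congr rfl fun x _ => ?_
    rw [hf, hg, show Real.sqrt (n x.1 x.2.1 * n x.1 x.2.2 / (2 * (∑ q, n x.1 q - 1)))
          * (π x.1 x.2.1 - π x.1 x.2.2)
        * (Real.sqrt (n x.1 x.2.1 * n x.1 x.2.2 / (2 * (∑ q, n x.1 q - 1)))
          * (πY x.1 x.2.1 - πY x.1 x.2.2))
        = Real.sqrt (n x.1 x.2.1 * n x.1 x.2.2 / (2 * (∑ q, n x.1 q - 1)))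
          * Real.sqrt (n x.1 x.2.1 * n x.1 x.2.2 / (2 * (∑ q, n x.1 q - 1)))
          * ((π x.1 x.2.1 - π x.1 x.2.2) * (πY x.1 x.2.1 - πY x.1 x.2.2)) from by ring,
      Real.mul_self_sqrt (hc x)]
  refine ⟨?_, ?_, ?_, ?_, ?_, ?_⟩
  · rw [e3]
    refine Finset.sum_congr rfl fun w _ => ?_
    congr 1
    calc ∑ q, ∑ q', n w q * n w q' * ((π w q - π w q') * (π w q - π w q'))
        = ∑ q, ∑ q', n w q * n w q' * (π w q - π w q') ^ 2 :=
          Finset.sum_congr rfl fun q _ => Finset.sum_congr rfl fun q' _ => by ring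
      _ = ∑ q, ∑ q' ∈ Finset.univ.erase q, n w q * n w q' * (π w q - π w q') ^ 2 :=
          (eraseFull _ (fun q => by simp)).symm
  · rw [h3']; exact Finset.sum_nonneg fun x _ => sq_nonneg _
  · rw [e1]
    refine Finset.sum_congr rfl fun w _ => ?_
    congr 1
    calc ∑ q, ∑ q', n w q * n w q' * ((πY w q - πY w q') * (πY w q - πY w q'))
        = ∑ q, ∑ q', n w q * n w q' * (πY w q - πY w q') ^ 2 :=
          Finset.sum_congr rfl fun q _ => Finset.sum_congr rfl fun q' _ => by ring
      _ = ∑ q, ∑ q' ∈ Finset.univ.erase q, n w q * n w q' * (πY w q - πY w q') ^ 2 :=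
          (eraseFull _ (fun q => by simp)).symm
  · rw [h1']; exact Finset.sum_nonneg fun x _ => sq_nonneg _
  · rw [e2]
    refine Finset.sum_congr rfl fun w _ => ?_
    congr 1
    calc ∑ q, ∑ q', n w q * n w q' * ((π w q - π w q') * (πY w q - πY w q'))
        = ∑ q, ∑ q', n w q * n w q' * (π w q - π w q') * (πY w q - πY w q') :=
          Finset.sum_congr rfl fun q _ => Finset.sum_congr rfl fun q' _ => by ring
      _ = ∑ q, ∑ q' ∈ Finset.univ.erase q,
            n w q * n w q' * (π w q - π w q') * (πY w q - πY w q') :=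
          (eraseFull _ (fun q => by simp)).symm
  · rw [h2', h1', h3', mul_comm]
    exact Finset.sum_mul_sq_le_sq_mul_sq _ f g
end

section
/- Work on a probability space with a finite index set I. For each i ∈ I, let ν_i and η_i be real random variables with E[ν_i] = 0, E[η_i] = 0, and E[ν_i²] < ∞, E[η_i²] < ∞, and assume the family of ℝ²-valued random variables ((ν_i, η_i))_{i∈I} is mutually independent across i. Let R, R_Δ : I → ℝ be fixed real vectors, G : I × I → ℝ a fixed real array, and set e_i := R_Δ(i) + ν_i, X_i := R(i) + η_i. Then the variance of S := Σ_i Σ_{j≠i} G_{ij} e_i X_j satisfies: Var(S) = Σ_i Σ_{j≠i} Σ_{k≠i} E[ν_i²] G_{ij} G_{ik} R(j) R(k) + Σ_i Σ_{j≠i} G_{ij}² E[ν_i²] E[η_j²] + Σ_i Σ_{j≠i} G_{ij} G_{ji} E[η_i ν_i] E[η_j ν_j] + 2 Σ_i Σ_{j≠i} Σ_{k≠i} E[ν_i η_i] G_{ij} G_{ki} R(j) R_Δ(k) + Σ_i Σ_{j≠i} Σ_{k≠i} E[η_i²] G_{ji} G_{ki} R_Δ(j) R_Δ(k). -/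
open Finset MeasureTheory ProbabilityTheory
open scoped ENNReal

section Aux
variable {Ω : Type*} {I : Type*} [MeasurableSpace Ω] {μ : Measure Ω} [IsProbabilityMeasure μ]

lemma aux_L2mul {f g : Ω → ℝ} (hf : MemLp f 2 μ) (hg : MemLp g 2 μ) :
    Integrable (fun ω => f ω * g ω) μ := by
  have h : (1:ℝ≥0∞)/1 = 1/2 + 1/2 := by rw [one_div_one, ENNReal.add_halves]
  haveI : ENNReal.HolderTriple 2 2 1 := ⟨by simpa [one_div] using h.symm⟩
  have h2 := hg.smul (φ := f) (r := 1) hf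
  rw [memLp_one_iff_integrable] at h2
  exact h2

variable {ν η : I → Ω → ℝ}
    (hmeas : ∀ i, Measurable (fun ω => (ν i ω, η i ω)))
    (hindep : iIndepFun (fun i ω => (ν i ω, η i ω)) μ)

include hmeas hindep

lemma aux_pair {i j : I} (hij : i ≠ j) (f g : ℝ × ℝ → ℝ)
    (hf : Measurable f) (hg : Measurable g) :
    ∫ ω, f (ν i ω, η i ω) * g (ν j ω, η j ω) ∂μ
      = (∫ ω, f (ν i ω, η i ω) ∂μ) * ∫ ω, g (ν j ω, η j ω) ∂μ := by
  have h1 : IndepFun (fun ω => f (ν i ω, η i ω)) (fun ω => g (ν j ω, η j ω)) μ :=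
    (hindep.indepFun hij).comp hf hg
  exact h1.integral_fun_mul_eq_mul_integral ((hf.comp (hmeas i)).aestronglyMeasurable)
    ((hg.comp (hmeas j)).aestronglyMeasurable)

lemma aux_trip {i j k : I} (hij : i ≠ j) (hik : i ≠ k) (hjk : j ≠ k) (f g h : ℝ × ℝ → ℝ)
    (hf : Measurable f) (hg : Measurable g) (hh : Measurable h) :
    ∫ ω, f (ν i ω, η i ω) * g (ν j ω, η j ω) * h (ν k ω, η k ω) ∂μ
      = (∫ ω, f (ν i ω, η i ω) ∂μ) * (∫ ω, g (ν j ω, η j ω) ∂μ)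
          * ∫ ω, h (ν k ω, η k ω) ∂μ := by
  have h1 : IndepFun (fun ω => ((ν i ω, η i ω), (ν j ω, η j ω)))
      (fun ω => (ν k ω, η k ω)) μ := hindep.indepFun_prodMk hmeas i j k hik hjk
  have h2 : IndepFun (fun ω => f (ν i ω, η i ω) * g (ν j ω, η j ω))
      (fun ω => h (ν k ω, η k ω)) μ :=
    h1.comp ((hf.comp measurable_fst).mul (hg.comp measurable_snd)) hh
  have h3 := h2.integral_fun_mul_eq_mul_integral
    (((hf.comp (hmeas i)).mul (hg.comp (hmeas j))).aestronglyMeasurable)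
    ((hh.comp (hmeas k)).aestronglyMeasurable)
  rw [h3, aux_pair hmeas hindep hij f g hf hg]

lemma aux_quad {i j k l : I} (hij : i ≠ j) (hik : i ≠ k) (hil : i ≠ l) (hjk : j ≠ k)
    (hjl : j ≠ l) (hkl : k ≠ l) (f g h e : ℝ × ℝ → ℝ)
    (hf : Measurable f) (hg : Measurable g) (hh : Measurable h) (he : Measurable e) :
    ∫ ω, f (ν i ω, η i ω) * g (ν j ω, η j ω) * (h (ν k ω, η k ω) * e (ν l ω, η l ω)) ∂μ
      = (∫ ω, f (ν i ω, η i ω) ∂μ) * (∫ ω, g (ν j ω, η j ω) ∂μ)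
          * ((∫ ω, h (ν k ω, η k ω) ∂μ) * ∫ ω, e (ν l ω, η l ω) ∂μ) := by
  have h1 : IndepFun (fun ω => ((ν i ω, η i ω), (ν j ω, η j ω)))
      (fun ω => ((ν k ω, η k ω), (ν l ω, η l ω))) μ :=
    hindep.indepFun_prodMk_prodMk hmeas i j k l hik hil hjk hjl
  have h2 : IndepFun (fun ω => f (ν i ω, η i ω) * g (ν j ω, η j ω))
      (fun ω => h (ν k ω, η k ω) * e (ν l ω, η l ω)) μ :=
    h1.comp ((hf.comp measurable_fst).mul (hg.comp measurable_snd))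
      ((hh.comp measurable_fst).mul (he.comp measurable_snd))
  have h3 := h2.integral_fun_mul_eq_mul_integral
    (((hf.comp (hmeas i)).mul (hg.comp (hmeas j))).aestronglyMeasurable)
    (((hh.comp (hmeas k)).mul (he.comp (hmeas l))).aestronglyMeasurable)
  rw [h3, aux_pair hmeas hindep hij f g hf hg,
    aux_pair hmeas hindep hkl h e hh he]

end Aux

/-- the variance decomposition of the (unnormalized) leave-one-out
LM statistic `S = Σ_iΣ_{j≠i}G_{ij}e_iX_j`, for `e_i = R_Δ(i) + ν_i`,
`X_i = R(i) + η_i`, with mean-zero square-integrable errors independent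
across observations (equation (7) of the paper). -/
theorem stmt_11 {Ω : Type*} {I : Type*} [Fintype I] [DecidableEq I]
    [MeasurableSpace Ω] (μ : Measure Ω) [IsProbabilityMeasure μ]
    (ν η : I → Ω → ℝ)
    (hmeas : ∀ i, Measurable (fun ω => (ν i ω, η i ω)))
    (hν2 : ∀ i, MemLp (ν i) 2 μ) (hη2 : ∀ i, MemLp (η i) 2 μ)
    (hνmean : ∀ i, ∫ ω, ν i ω ∂μ = 0) (hηmean : ∀ i, ∫ ω, η i ω ∂μ = 0)
    (hindep : iIndepFun
      (fun i ω => (ν i ω, η i ω)) μ)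
    (RΔ R : I → ℝ) (G : I → I → ℝ) :
    variance (fun ω => ∑ i, ∑ j ∈ Finset.univ.erase i,
        G i j * ((RΔ i + ν i ω) * (R j + η j ω))) μ
      = (∑ i, ∑ j ∈ Finset.univ.erase i, ∑ k ∈ Finset.univ.erase i,
          (∫ ω, (ν i ω) ^ 2 ∂μ) * G i j * G i k * R j * R k)
        + (∑ i, ∑ j ∈ Finset.univ.erase i,
            (G i j) ^ 2 * (∫ ω, (ν i ω) ^ 2 ∂μ) * (∫ ω, (η j ω) ^ 2 ∂μ))
        + (∑ i, ∑ j ∈ Finset.univ.erase i,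
            G i j * G j i * (∫ ω, η i ω * ν i ω ∂μ) * (∫ ω, η j ω * ν j ω ∂μ))
        + 2 * (∑ i, ∑ j ∈ Finset.univ.erase i, ∑ k ∈ Finset.univ.erase i,
            (∫ ω, ν i ω * η i ω ∂μ) * G i j * G k i * R j * RΔ k)
        + (∑ i, ∑ j ∈ Finset.univ.erase i, ∑ k ∈ Finset.univ.erase i,
            (∫ ω, (η i ω) ^ 2 ∂μ) * G j i * G k i * RΔ j * RΔ k) := by
  classical
  -- basic measurability / integrability
  have hνmeas : ∀ i, Measurable (ν i) := fun i => measurable_fst.comp (hmeas i)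
  have hηmeas : ∀ i, Measurable (η i) := fun i => measurable_snd.comp (hmeas i)
  have hνint : ∀ i, Integrable (ν i) μ := fun i => (hν2 i).integrable one_le_two
  have hηint : ∀ i, Integrable (η i) μ := fun i => (hη2 i).integrable one_le_two
  have hνηint : ∀ i, Integrable (fun ω => ν i ω * η i ω) μ :=
    fun i => aux_L2mul (hν2 i) (hη2 i)
  have hν2int : ∀ i, Integrable (fun ω => ν i ω ^ 2) μ := fun i => (hν2 i).integrable_sq
  have hη2int : ∀ i, Integrable (fun ω => η i ω ^ 2) μ := fun i => (hη2 i).integrable_sq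
  have hνηL2 : ∀ i j, i ≠ j → MemLp (fun ω => ν i ω * η j ω) 2 μ := by
    intro i j hij
    have hind : IndepFun (fun ω => ν i ω ^ 2) (fun ω => η j ω ^ 2) μ :=
      (hindep.indepFun hij).comp (measurable_fst.pow_const 2) (measurable_snd.pow_const 2)
    have hsq := hind.integrable_mul (hν2int i) (hη2int j)
    refine (memLp_two_iff_integrable_sq (f := fun ω => ν i ω * η j ω) ((hνmeas i).mul (hηmeas j)).aestronglyMeasurable).2 ?_
    have : (fun ω => (ν i ω * η j ω) ^ 2)
        = (fun ω => ν i ω ^ 2) * fun ω => η j ω ^ 2 := by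
      funext ω; simp [mul_pow]
    rw [this]; exact hsq
  -- mean-zero product of distinct indices
  have E1 : ∀ i j, i ≠ j → ∫ ω, ν i ω * η j ω ∂μ = 0 := by
    intro i j hij
    have := aux_pair hmeas hindep hij (fun p => p.1) (fun p => p.2)
      measurable_fst measurable_snd
    simpa [hνmean i, hηmean j] using this
  -- abbreviations
  obtain ⟨a, ha⟩ : ∃ a : I → ℝ, a = fun i => ∑ j ∈ Finset.univ.erase i, G i j * R j := ⟨_, rfl⟩
  obtain ⟨b, hb⟩ : ∃ b : I → ℝ, b = fun i => ∑ j ∈ Finset.univ.erase i, G j i * RΔ j := ⟨_, rfl⟩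
  obtain ⟨c, hc⟩ : ∃ c : ℝ,
      c = ∑ i, ∑ j ∈ Finset.univ.erase i, G i j * (RΔ i * R j) := ⟨_, rfl⟩
  obtain ⟨L, hLdef⟩ : ∃ L : Ω → ℝ,
      L = fun ω => ∑ i, (a i * ν i ω + b i * η i ω) := ⟨_, rfl⟩
  obtain ⟨B, hBdef⟩ : ∃ B : Ω → ℝ,
      B = fun ω => ∑ i, ∑ j ∈ Finset.univ.erase i, G i j * (ν i ω * η j ω) := ⟨_, rfl⟩
  -- MemLp facts
  have hgL2 : ∀ i, MemLp (fun ω => a i * ν i ω + b i * η i ω) 2 μ :=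
    fun i => ((hν2 i).const_mul (a i)).add ((hη2 i).const_mul (b i))
  have hLL2 : MemLp L 2 μ := by
    rw [hLdef]
    exact memLp_finset_sum _ fun i _ => hgL2 i
  have hBL2 : MemLp B 2 μ := by
    rw [hBdef]
    exact memLp_finset_sum _ fun i _ => memLp_finset_sum _
      fun j hj => ((hνηL2 i j (Finset.ne_of_mem_erase hj).symm).const_mul (G i j))
  -- swap of double sums over off-diagonal pairs
  have hswap : ∀ f : I → I → ℝ, (∑ i, ∑ j ∈ Finset.univ.erase i, f i j)
      = ∑ j, ∑ i ∈ Finset.univ.erase j, f i j := by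
    intro f
    simp_rw [Finset.sum_erase_eq_sub (Finset.mem_univ _), Finset.sum_sub_distrib]
    rw [Finset.sum_comm]
  -- rewrite the statistic as constant plus centered pieces
  have hSrw : (fun ω => ∑ i, ∑ j ∈ Finset.univ.erase i,
        G i j * ((RΔ i + ν i ω) * (R j + η j ω)))
      = fun ω => c + (L ω + B ω) := by
    funext ω
    have e1 : ∀ i j, G i j * ((RΔ i + ν i ω) * (R j + η j ω))
        = G i j * (RΔ i * R j) + ((G i j * R j) * ν i ω
            + (G i j * RΔ i * η j ω + G i j * (ν i ω * η j ω))) := fun i j => by ring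
    simp_rw [e1, Finset.sum_add_distrib]
    rw [← hc]
    have e2 : (∑ i, ∑ j ∈ Finset.univ.erase i, (G i j * R j) * ν i ω)
        = ∑ i, a i * ν i ω := by
      refine Finset.sum_congr rfl fun i _ => ?_
      rw [← Finset.sum_mul, ha]
    have e3 : (∑ i, ∑ j ∈ Finset.univ.erase i, G i j * RΔ i * η j ω)
        = ∑ i, b i * η i ω := by
      rw [hswap]
      refine Finset.sum_congr rfl fun j _ => ?_
      rw [← Finset.sum_mul, hb]
    rw [e2, e3, hLdef, hBdef]
    simp [Finset.sum_add_distrib]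
    ring
  -- expectations of the centered pieces
  have hgint : ∀ i, Integrable (fun ω => a i * ν i ω + b i * η i ω) μ :=
    fun i => ((hνint i).const_mul _).add ((hηint i).const_mul _)
  have hEg : ∀ i, ∫ ω, (a i * ν i ω + b i * η i ω) ∂μ = 0 := by
    intro i
    rw [integral_add ((hνint i).const_mul _) ((hηint i).const_mul _),
      integral_const_mul, integral_const_mul, hνmean, hηmean]
    ring
  have hEL : ∫ ω, L ω ∂μ = 0 := by
    rw [hLdef, integral_finset_sum _ (fun i _ => hgint i)]
    exact Finset.sum_eq_zero fun i _ => hEg i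
  have hEB : ∫ ω, B ω ∂μ = 0 := by
    rw [hBdef, integral_finset_sum _ (fun i _ => integrable_finset_sum _
      (fun j hj => ((aux_L2mul (hν2 i) (hη2 j)).const_mul (G i j))))]
    refine Finset.sum_eq_zero fun i _ => ?_
    rw [integral_finset_sum _
      (fun j hj => ((aux_L2mul (hν2 i) (hη2 j)).const_mul (G i j)))]
    refine Finset.sum_eq_zero fun j hj => ?_
    rw [integral_const_mul, E1 i j (Finset.ne_of_mem_erase hj).symm, mul_zero]
  -- off-diagonal orthogonality of the linear part
  have hgg : ∀ i k, i ≠ k →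
      ∫ ω, (a i * ν i ω + b i * η i ω) * (a k * ν k ω + b k * η k ω) ∂μ = 0 := by
    intro i k hik
    have := aux_pair hmeas hindep hik (fun p => a i * p.1 + b i * p.2)
      (fun p => a k * p.1 + b k * p.2) (by fun_prop) (by fun_prop)
    simpa [hEg i] using this
  -- diagonal second moment of the linear part
  have hgsq : ∀ i, ∫ ω, (a i * ν i ω + b i * η i ω) * (a i * ν i ω + b i * η i ω) ∂μ
      = a i ^ 2 * (∫ ω, ν i ω ^ 2 ∂μ)
        + (2 * (a i * b i) * (∫ ω, ν i ω * η i ω ∂μ)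
            + b i ^ 2 * (∫ ω, η i ω ^ 2 ∂μ)) := by
    intro i
    have h1 : ∀ ω, (a i * ν i ω + b i * η i ω) * (a i * ν i ω + b i * η i ω)
        = a i ^ 2 * ν i ω ^ 2 + (2 * (a i * b i) * (ν i ω * η i ω)
            + b i ^ 2 * η i ω ^ 2) := fun ω => by ring
    simp_rw [h1]
    have i1 : Integrable (fun ω => a i ^ 2 * ν i ω ^ 2) μ := (hν2int i).const_mul _
    have i2 : Integrable (fun ω => 2 * (a i * b i) * (ν i ω * η i ω)) μ :=
      (hνηint i).const_mul _
    have i3 : Integrable (fun ω => b i ^ 2 * η i ω ^ 2) μ := (hη2int i).const_mul _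
    have i23 : Integrable
        (fun ω => 2 * (a i * b i) * (ν i ω * η i ω) + b i ^ 2 * η i ω ^ 2) μ := i2.add i3
    rw [integral_add i1 i23, integral_add i2 i3, integral_const_mul,
      integral_const_mul, integral_const_mul]
  -- factorization identities for triple sums
  have hsq1 : ∀ (i : I) (x : ℝ),
      (∑ j ∈ Finset.univ.erase i, ∑ k ∈ Finset.univ.erase i,
        x * G i j * G i k * R j * R k)
      = x * ((∑ j ∈ Finset.univ.erase i, G i j * R j)
          * (∑ k ∈ Finset.univ.erase i, G i k * R k)) := by
    intro i x
    rw [Finset.sum_mul_sum, Finset.mul_sum]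
    refine Finset.sum_congr rfl fun j _ => ?_
    rw [Finset.mul_sum]
    exact Finset.sum_congr rfl fun k _ => by ring
  have hsq4 : ∀ (i : I) (x : ℝ),
      (∑ j ∈ Finset.univ.erase i, ∑ k ∈ Finset.univ.erase i,
        x * G i j * G k i * R j * RΔ k)
      = x * ((∑ j ∈ Finset.univ.erase i, G i j * R j)
          * (∑ k ∈ Finset.univ.erase i, G k i * RΔ k)) := by
    intro i x
    rw [Finset.sum_mul_sum, Finset.mul_sum]
    refine Finset.sum_congr rfl fun j _ => ?_
    rw [Finset.mul_sum]
    exact Finset.sum_congr rfl fun k _ => by ring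
  have hsq5 : ∀ (i : I) (x : ℝ),
      (∑ j ∈ Finset.univ.erase i, ∑ k ∈ Finset.univ.erase i,
        x * G j i * G k i * RΔ j * RΔ k)
      = x * ((∑ j ∈ Finset.univ.erase i, G j i * RΔ j)
          * (∑ k ∈ Finset.univ.erase i, G k i * RΔ k)) := by
    intro i x
    rw [Finset.sum_mul_sum, Finset.mul_sum]
    refine Finset.sum_congr rfl fun j _ => ?_
    rw [Finset.mul_sum]
    exact Finset.sum_congr rfl fun k _ => by ring
  -- second moment of the linear part
  have hEL2 : ∫ ω, L ω * L ω ∂μ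
      = (∑ i, ∑ j ∈ Finset.univ.erase i, ∑ k ∈ Finset.univ.erase i,
          (∫ ω, (ν i ω) ^ 2 ∂μ) * G i j * G i k * R j * R k)
        + (2 * (∑ i, ∑ j ∈ Finset.univ.erase i, ∑ k ∈ Finset.univ.erase i,
            (∫ ω, ν i ω * η i ω ∂μ) * G i j * G k i * R j * RΔ k)
          + (∑ i, ∑ j ∈ Finset.univ.erase i, ∑ k ∈ Finset.univ.erase i,
            (∫ ω, (η i ω) ^ 2 ∂μ) * G j i * G k i * RΔ j * RΔ k)) := by
    have hpt : ∀ ω, L ω * L ω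
        = ∑ i, ∑ k, (a i * ν i ω + b i * η i ω) * (a k * ν k ω + b k * η k ω) := by
      intro ω; rw [hLdef, Finset.sum_mul_sum]
    simp_rw [hpt]
    rw [integral_finset_sum _ (fun i _ => integrable_finset_sum _
      fun k _ => aux_L2mul (hgL2 i) (hgL2 k))]
    have e4 : ∀ i : I, ∫ ω, ∑ k, (a i * ν i ω + b i * η i ω)
          * (a k * ν k ω + b k * η k ω) ∂μ
        = ∑ k, ∫ ω, (a i * ν i ω + b i * η i ω) * (a k * ν k ω + b k * η k ω) ∂μ :=
      fun i => integral_finset_sum _ fun k _ => aux_L2mul (hgL2 i) (hgL2 k)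
    simp_rw [e4]
    have e5 : ∀ i : I, (∑ k, ∫ ω, (a i * ν i ω + b i * η i ω)
          * (a k * ν k ω + b k * η k ω) ∂μ)
        = ∫ ω, (a i * ν i ω + b i * η i ω) * (a i * ν i ω + b i * η i ω) ∂μ :=
      fun i => Finset.sum_eq_single_of_mem i (Finset.mem_univ i)
        (fun k _ hki => hgg i k (Ne.symm hki))
    simp_rw [e5, hgsq]
    rw [Finset.sum_add_distrib, Finset.sum_add_distrib]
    congr 1
    · refine Finset.sum_congr rfl fun i _ => ?_
      rw [hsq1 i _]
      simp only [ha]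
      ring
    congr 1
    · rw [Finset.mul_sum]
      refine Finset.sum_congr rfl fun i _ => ?_
      rw [hsq4 i _]
      simp only [ha, hb]
      ring
    · refine Finset.sum_congr rfl fun i _ => ?_
      rw [hsq5 i _]
      simp only [hb]
      ring
  -- the linear and bilinear parts are uncorrelated
  have hLB1 : ∀ m i j : I, j ≠ i →
      ∫ ω, (a m * ν m ω + b m * η m ω) * (G i j * (ν i ω * η j ω)) ∂μ = 0 := by
    intro m i j hji
    have hij : i ≠ j := hji.symm
    have hpt : ∀ ω, (a m * ν m ω + b m * η m ω) * (G i j * (ν i ω * η j ω))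
        = G i j * ((a m * ν m ω + b m * η m ω) * (ν i ω * η j ω)) := fun ω => by ring
    simp_rw [hpt]
    rw [integral_const_mul]
    suffices h0 : ∫ ω, (a m * ν m ω + b m * η m ω) * (ν i ω * η j ω) ∂μ = 0 by
      rw [h0, mul_zero]
    by_cases hmi : m = i
    · subst hmi
      have hpt2 : ∀ ω, (a m * ν m ω + b m * η m ω) * (ν m ω * η j ω)
          = (a m * ν m ω + b m * η m ω) * ν m ω * η j ω := fun ω => by ring
      simp_rw [hpt2]
      have := aux_pair hmeas hindep hij (fun p => (a m * p.1 + b m * p.2) * p.1)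
        (fun p => p.2) (by fun_prop) measurable_snd
      simpa [hηmean j] using this
    · by_cases hmj : m = j
      · subst hmj
        have hpt2 : ∀ ω, (a m * ν m ω + b m * η m ω) * (ν i ω * η m ω)
            = ν i ω * ((a m * ν m ω + b m * η m ω) * η m ω) := fun ω => by ring
        simp_rw [hpt2]
        have := aux_pair hmeas hindep hij (fun p => p.1)
          (fun p => (a m * p.1 + b m * p.2) * p.2) measurable_fst (by fun_prop)
        simpa [hνmean i] using this
      · have hpt2 : ∀ ω, (a m * ν m ω + b m * η m ω) * (ν i ω * η j ω)
            = ν i ω * η j ω * (a m * ν m ω + b m * η m ω) := fun ω => by ring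
        simp_rw [hpt2]
        have := aux_trip hmeas hindep hij (Ne.symm hmi) (Ne.symm hmj)
          (fun p => p.1) (fun p => p.2) (fun p => a m * p.1 + b m * p.2)
          measurable_fst measurable_snd (by fun_prop)
        simpa [hνmean i] using this
  have hELB0 : ∫ ω, L ω * B ω ∂μ = 0 := by
    have hpt : ∀ ω, L ω * B ω = ∑ m, ∑ i, ∑ j ∈ Finset.univ.erase i,
        (a m * ν m ω + b m * η m ω) * (G i j * (ν i ω * η j ω)) := by
      intro ω
      rw [hLdef, hBdef, Finset.sum_mul_sum]
      exact Finset.sum_congr rfl fun m _ => Finset.sum_congr rfl fun i _ =>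
        Finset.mul_sum _ _ _
    simp_rw [hpt]
    rw [integral_finset_sum _ (fun m _ => integrable_finset_sum _
      (fun i _ => integrable_finset_sum _ (fun j hj => aux_L2mul (hgL2 m)
        ((hνηL2 i j (Finset.ne_of_mem_erase hj).symm).const_mul (G i j)))))]
    refine Finset.sum_eq_zero fun m _ => ?_
    rw [integral_finset_sum _ (fun i _ => integrable_finset_sum _
      (fun j hj => aux_L2mul (hgL2 m)
        ((hνηL2 i j (Finset.ne_of_mem_erase hj).symm).const_mul (G i j))))]
    refine Finset.sum_eq_zero fun i _ => ?_
    rw [integral_finset_sum _ (fun j hj => aux_L2mul (hgL2 m)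
      ((hνηL2 i j (Finset.ne_of_mem_erase hj).symm).const_mul (G i j)))]
    exact Finset.sum_eq_zero fun j hj => hLB1 m i j (Finset.ne_of_mem_erase hj)
  -- fourth moments of the bilinear part
  have hV0 : ∀ i j k l : I, i ≠ j → k ≠ l → ¬(k = i ∧ l = j) → ¬(k = j ∧ l = i) →
      ∫ ω, ν i ω * η j ω * (ν k ω * η l ω) ∂μ = 0 := by
    intro i j k l hij hkl hd hs
    by_cases hki : k = i
    · subst hki
      have hlj : l ≠ j := fun h => hd ⟨rfl, h⟩
      have hpt : ∀ ω, ν k ω * η j ω * (ν k ω * η l ω)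
          = ν k ω * ν k ω * η j ω * η l ω := fun ω => by ring
      simp_rw [hpt]
      have := aux_trip hmeas hindep hij hkl hlj.symm
        (fun p => p.1 * p.1) (fun p => p.2) (fun p => p.2)
        (by fun_prop) measurable_snd measurable_snd
      simpa [hηmean j] using this
    · by_cases hkj : k = j
      · subst hkj
        have hli : l ≠ i := fun h => hs ⟨rfl, h⟩
        have hpt : ∀ ω, ν i ω * η k ω * (ν k ω * η l ω)
            = ν i ω * (η k ω * ν k ω) * η l ω := fun ω => by ring
        simp_rw [hpt]
        have := aux_trip hmeas hindep hij (fun h => hli h.symm) hkl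
          (fun p => p.1) (fun p => p.2 * p.1) (fun p => p.2)
          measurable_fst (by fun_prop) measurable_snd
        simpa [hνmean i] using this
      · by_cases hli : l = i
        · subst hli
          have hpt : ∀ ω, ν l ω * η j ω * (ν k ω * η l ω)
              = η l ω * ν l ω * η j ω * ν k ω := fun ω => by ring
          simp_rw [hpt]
          have := aux_trip hmeas hindep hij (Ne.symm hki) (Ne.symm hkj)
            (fun p => p.2 * p.1) (fun p => p.2) (fun p => p.1)
            (by fun_prop) measurable_snd measurable_fst
          simpa [hηmean j] using this
        · by_cases hlj : l = j
          · subst hlj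
            have hpt : ∀ ω, ν i ω * η l ω * (ν k ω * η l ω)
                = ν i ω * (η l ω * η l ω) * ν k ω := fun ω => by ring
            simp_rw [hpt]
            have := aux_trip hmeas hindep hij (Ne.symm hki) (Ne.symm hkj)
              (fun p => p.1) (fun p => p.2 * p.2) (fun p => p.1)
              measurable_fst (by fun_prop) measurable_fst
            simpa [hνmean i] using this
          · have := aux_quad hmeas hindep hij (Ne.symm hki) (Ne.symm hli)
              (Ne.symm hkj) (Ne.symm hlj) hkl
              (fun p => p.1) (fun p => p.2) (fun p => p.1) (fun p => p.2)
              measurable_fst measurable_snd measurable_fst measurable_snd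
            simpa [hνmean i] using this
  have hVd : ∀ i j : I, i ≠ j → ∫ ω, ν i ω * η j ω * (ν i ω * η j ω) ∂μ
      = (∫ ω, ν i ω ^ 2 ∂μ) * ∫ ω, η j ω ^ 2 ∂μ := by
    intro i j hij
    have hpt : ∀ ω, ν i ω * η j ω * (ν i ω * η j ω)
        = ν i ω ^ 2 * η j ω ^ 2 := fun ω => by ring
    simp_rw [hpt]
    have := aux_pair hmeas hindep hij (fun p => p.1 ^ 2) (fun p => p.2 ^ 2)
      (by fun_prop) (by fun_prop)
    simpa using this
  have hVs : ∀ i j : I, i ≠ j → ∫ ω, ν i ω * η j ω * (ν j ω * η i ω) ∂μ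
      = (∫ ω, η i ω * ν i ω ∂μ) * ∫ ω, η j ω * ν j ω ∂μ := by
    intro i j hij
    have hpt : ∀ ω, ν i ω * η j ω * (ν j ω * η i ω)
        = η i ω * ν i ω * (η j ω * ν j ω) := fun ω => by ring
    simp_rw [hpt]
    have := aux_pair hmeas hindep hij (fun p => p.2 * p.1) (fun p => p.2 * p.1)
      (by fun_prop) (by fun_prop)
    simpa using this
  have hbbint : ∀ (i j k l : I), j ≠ i → l ≠ k → Integrable (fun ω =>
      G i j * (ν i ω * η j ω) * (G k l * (ν k ω * η l ω))) μ := fun i j k l hj hl =>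
    aux_L2mul ((hνηL2 i j hj.symm).const_mul (G i j))
      ((hνηL2 k l hl.symm).const_mul (G k l))
  have hkey : ∀ i j : I, j ≠ i →
      (∑ k, ∑ l ∈ Finset.univ.erase k,
        ∫ ω, G i j * (ν i ω * η j ω) * (G k l * (ν k ω * η l ω)) ∂μ)
      = G i j ^ 2 * (∫ ω, ν i ω ^ 2 ∂μ) * (∫ ω, η j ω ^ 2 ∂μ)
        + G i j * G j i * (∫ ω, η i ω * ν i ω ∂μ) * (∫ ω, η j ω * ν j ω ∂μ) := by
    intro i j hji
    have hij : i ≠ j := hji.symm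
    have hW : ∀ k l : I, ∫ ω, G i j * (ν i ω * η j ω) * (G k l * (ν k ω * η l ω)) ∂μ
        = G i j * G k l * ∫ ω, ν i ω * η j ω * (ν k ω * η l ω) ∂μ := by
      intro k l
      have hpt : ∀ ω, G i j * (ν i ω * η j ω) * (G k l * (ν k ω * η l ω))
          = G i j * G k l * (ν i ω * η j ω * (ν k ω * η l ω)) := fun ω => by ring
      simp_rw [hpt]
      rw [integral_const_mul]
    simp_rw [hW]
    obtain ⟨F, hFdef⟩ : ∃ F : I → ℝ, F = fun k => ∑ l ∈ Finset.univ.erase k,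
        G i j * G k l * ∫ ω, ν i ω * η j ω * (ν k ω * η l ω) ∂μ := ⟨_, rfl⟩
    have h0 : (∑ k, ∑ l ∈ Finset.univ.erase k,
        G i j * G k l * ∫ ω, ν i ω * η j ω * (ν k ω * η l ω) ∂μ) = ∑ k, F k := by
      rw [hFdef]
    rw [h0, ← Finset.add_sum_erase _ F (Finset.mem_univ i),
      ← Finset.add_sum_erase _ F (Finset.mem_erase.mpr ⟨hji, Finset.mem_univ j⟩)]
    simp only [hFdef]
    have hrest : (∑ k ∈ (Finset.univ.erase i).erase j, ∑ l ∈ Finset.univ.erase k,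
        G i j * G k l * ∫ ω, ν i ω * η j ω * (ν k ω * η l ω) ∂μ) = 0 := by
      refine Finset.sum_eq_zero fun k hk => Finset.sum_eq_zero fun l hl => ?_
      have hkj : k ≠ j := Finset.ne_of_mem_erase hk
      have hki : k ≠ i := Finset.ne_of_mem_erase (Finset.mem_of_mem_erase hk)
      rw [hV0 i j k l hij (Ne.symm (Finset.ne_of_mem_erase hl))
        (fun h => hki h.1) (fun h => hkj h.1), mul_zero]
    have hFi : (∑ l ∈ Finset.univ.erase i,
        G i j * G i l * ∫ ω, ν i ω * η j ω * (ν i ω * η l ω) ∂μ)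
        = G i j ^ 2 * (∫ ω, ν i ω ^ 2 ∂μ) * (∫ ω, η j ω ^ 2 ∂μ) := by
      rw [Finset.sum_eq_single_of_mem j (Finset.mem_erase.mpr ⟨hji, Finset.mem_univ j⟩)
          (fun l hl hlj => by
            rw [hV0 i j i l hij (Ne.symm (Finset.ne_of_mem_erase hl))
              (fun h => hlj h.2) (fun h => hij h.1), mul_zero]),
        hVd i j hij]
      ring
    have hFj : (∑ l ∈ Finset.univ.erase j,
        G i j * G j l * ∫ ω, ν i ω * η j ω * (ν j ω * η l ω) ∂μ)
        = G i j * G j i * (∫ ω, η i ω * ν i ω ∂μ) * (∫ ω, η j ω * ν j ω ∂μ) := by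
      rw [Finset.sum_eq_single_of_mem i (Finset.mem_erase.mpr ⟨hij, Finset.mem_univ i⟩)
          (fun l hl hli => by
            rw [hV0 i j j l hij (Ne.symm (Finset.ne_of_mem_erase hl))
              (fun h => hji h.1) (fun h => hli h.2), mul_zero]),
        hVs i j hij]
      ring
    rw [hFi, hFj, hrest, add_zero]
  have hEB2 : ∫ ω, B ω * B ω ∂μ
      = (∑ i, ∑ j ∈ Finset.univ.erase i,
            (G i j) ^ 2 * (∫ ω, (ν i ω) ^ 2 ∂μ) * (∫ ω, (η j ω) ^ 2 ∂μ))
        + (∑ i, ∑ j ∈ Finset.univ.erase i,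
            G i j * G j i * (∫ ω, η i ω * ν i ω ∂μ) * (∫ ω, η j ω * ν j ω ∂μ)) := by
    have hpt : ∀ ω, B ω * B ω
        = ∑ i, ∑ j ∈ Finset.univ.erase i, ∑ k, ∑ l ∈ Finset.univ.erase k,
            G i j * (ν i ω * η j ω) * (G k l * (ν k ω * η l ω)) := by
      intro ω
      rw [hBdef, Finset.sum_mul]
      refine Finset.sum_congr rfl fun i _ => ?_
      rw [Finset.sum_mul]
      refine Finset.sum_congr rfl fun j _ => ?_
      rw [Finset.mul_sum]
      refine Finset.sum_congr rfl fun k _ => ?_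
      rw [Finset.mul_sum]
    simp_rw [hpt]
    calc ∫ ω, ∑ i, ∑ j ∈ Finset.univ.erase i, ∑ k, ∑ l ∈ Finset.univ.erase k,
            G i j * (ν i ω * η j ω) * (G k l * (ν k ω * η l ω)) ∂μ
        = ∑ i, ∑ j ∈ Finset.univ.erase i, ∑ k, ∑ l ∈ Finset.univ.erase k,
            ∫ ω, G i j * (ν i ω * η j ω) * (G k l * (ν k ω * η l ω)) ∂μ := by
          rw [integral_finset_sum _ (fun i _ => integrable_finset_sum _ fun j hj =>
            integrable_finset_sum _ fun k _ => integrable_finset_sum _ fun l hl =>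
              hbbint i j k l (Finset.ne_of_mem_erase hj) (Finset.ne_of_mem_erase hl))]
          refine Finset.sum_congr rfl fun i _ => ?_
          rw [integral_finset_sum _ (fun j hj =>
            integrable_finset_sum _ fun k _ => integrable_finset_sum _ fun l hl =>
              hbbint i j k l (Finset.ne_of_mem_erase hj) (Finset.ne_of_mem_erase hl))]
          refine Finset.sum_congr rfl fun j hj => ?_
          rw [integral_finset_sum _ (fun k _ => integrable_finset_sum _ fun l hl =>
              hbbint i j k l (Finset.ne_of_mem_erase hj) (Finset.ne_of_mem_erase hl))]
          refine Finset.sum_congr rfl fun k _ => ?_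
          exact integral_finset_sum _ fun l hl =>
              hbbint i j k l (Finset.ne_of_mem_erase hj) (Finset.ne_of_mem_erase hl)
      _ = ∑ i, ∑ j ∈ Finset.univ.erase i,
            (G i j ^ 2 * (∫ ω, ν i ω ^ 2 ∂μ) * (∫ ω, η j ω ^ 2 ∂μ)
              + G i j * G j i * (∫ ω, η i ω * ν i ω ∂μ) * (∫ ω, η j ω * ν j ω ∂μ)) :=
          Finset.sum_congr rfl fun i _ => Finset.sum_congr rfl fun j hj =>
            hkey i j (Finset.ne_of_mem_erase hj)
      _ = _ := by simp only [Finset.sum_add_distrib]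
  -- final assembly
  rw [hSrw]
  have hTL2 : MemLp (fun ω => L ω + B ω) 2 μ := hLL2.add hBL2
  have hXL2 : MemLp (fun ω => c + (L ω + B ω)) 2 μ := (memLp_const c).add hTL2
  rw [variance_eq_sub hXL2]
  simp only [Pi.pow_apply]
  have hT : Integrable (fun ω => L ω + B ω) μ := hTL2.integrable one_le_two
  have hET : ∫ ω, (L ω + B ω) ∂μ = 0 := by
    rw [integral_add (hLL2.integrable one_le_two) (hBL2.integrable one_le_two),
      hEL, hEB, add_zero]
  have hEX : ∫ ω, (c + (L ω + B ω)) ∂μ = c := by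
    rw [integral_add (integrable_const c) hT, hET, add_zero, integral_const,
      probReal_univ, one_smul]
  have iLL : Integrable (fun ω => L ω * L ω) μ := aux_L2mul hLL2 hLL2
  have iLB : Integrable (fun ω => L ω * B ω) μ := aux_L2mul hLL2 hBL2
  have iBB : Integrable (fun ω => B ω * B ω) μ := aux_L2mul hBL2 hBL2
  have hEX2 : ∫ ω, (c + (L ω + B ω)) ^ 2 ∂μ
      = c ^ 2 + (2 * c * ∫ ω, (L ω + B ω) ∂μ
          + (∫ ω, L ω * L ω ∂μ + (2 * ∫ ω, L ω * B ω ∂μ + ∫ ω, B ω * B ω ∂μ))) := by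
    have hpt : ∀ ω, (c + (L ω + B ω)) ^ 2
        = c ^ 2 + (2 * c * (L ω + B ω) + (L ω * L ω + (2 * (L ω * B ω) + B ω * B ω))) :=
      fun ω => by ring
    simp_rw [hpt]
    have i1 : Integrable (fun ω => 2 * c * (L ω + B ω)) μ := hT.const_mul _
    have i2 : Integrable (fun ω => 2 * (L ω * B ω)) μ := iLB.const_mul _
    have i3 : Integrable (fun ω => 2 * (L ω * B ω) + B ω * B ω) μ := i2.add iBB
    have i4 : Integrable (fun ω => L ω * L ω + (2 * (L ω * B ω) + B ω * B ω)) μ :=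
      iLL.add i3
    have i5 : Integrable (fun ω => 2 * c * (L ω + B ω)
        + (L ω * L ω + (2 * (L ω * B ω) + B ω * B ω))) μ := i1.add i4
    rw [integral_add (integrable_const _) i5, integral_add i1 i4, integral_add iLL i3,
      integral_add i2 iBB, integral_const_mul, integral_const_mul, integral_const,
      probReal_univ, one_smul]
  rw [hEX2, hEX, hET, hEL2, hELB0, hEB2]
  ring
end

section
/- Let I be a finite index set, G : I × I → ℝ, x, y : I → ℝ with x_i ≥ 0 and y_i ≥ 0 for all i, and ρ : I → [−1, 1]. Then Σ_{i} Σ_{j≠i} G_{ij}² x_i y_j + Σ_{i} Σ_{j≠i} G_{ij} G_{ji} · ρ_i √(x_i y_i) · ρ_j √(x_j y_j) ≥ Σ_{i} Σ_{j≠i} G_{ij}² x_i y_j (1 − ρ_i²). Equivalently, Σ_{i≠j} G_{ij}² x_i y_j ρ_i² + Σ_{i≠j} G_{ij} G_{ji} ρ_i ρ_j √(x_i y_i x_j y_j) = (1/2) Σ_{i≠j} ( G_{ij} ρ_i √(x_i y_j) + G_{ji} ρ_j √(x_j y_i) )² ≥ 0. -/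
open Finset

/-- completing-the-square inequality for the second line of the LM
variance: `Σ_{i≠j}G_{ij}²x_iy_j + Σ_{i≠j}G_{ij}G_{ji}·ρ_i√(x_iy_i)·ρ_j√(x_jy_j)
  ≥ Σ_{i≠j}G_{ij}²x_iy_j(1−ρ_i²)`, via the identity
`Σ_{i≠j}G_{ij}²x_iy_jρ_i² + Σ_{i≠j}G_{ij}G_{ji}ρ_iρ_j√(x_iy_ix_jy_j)
  = (1/2)Σ_{i≠j}(G_{ij}ρ_i√(x_iy_j) + G_{ji}ρ_j√(x_jy_i))² ≥ 0`. -/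
theorem stmt_14 {I : Type*} [Fintype I] [DecidableEq I]
    (G : I → I → ℝ) (x y ρ : I → ℝ)
    (hx : ∀ i, 0 ≤ x i) (hy : ∀ i, 0 ≤ y i)
    (hρ : ∀ i, ρ i ∈ Set.Icc (-1 : ℝ) 1) :
    (∑ i, ∑ j ∈ Finset.univ.erase i, (G i j) ^ 2 * x i * y j * (1 - (ρ i) ^ 2)
        ≤ (∑ i, ∑ j ∈ Finset.univ.erase i, (G i j) ^ 2 * x i * y j)
          + ∑ i, ∑ j ∈ Finset.univ.erase i, G i j * G j i *
              (ρ i * Real.sqrt (x i * y i)) * (ρ j * Real.sqrt (x j * y j))) ∧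
    ((∑ i, ∑ j ∈ Finset.univ.erase i, (G i j) ^ 2 * x i * y j * (ρ i) ^ 2)
        + (∑ i, ∑ j ∈ Finset.univ.erase i, G i j * G j i *
            ρ i * ρ j * Real.sqrt (x i * y i * (x j * y j)))
      = (1 / 2) * ∑ i, ∑ j ∈ Finset.univ.erase i,
          (G i j * ρ i * Real.sqrt (x i * y j)
            + G j i * ρ j * Real.sqrt (x j * y i)) ^ 2) ∧
    (0 ≤ (1 / 2) * ∑ i, ∑ j ∈ Finset.univ.erase i,
          (G i j * ρ i * Real.sqrt (x i * y j)
            + G j i * ρ j * Real.sqrt (x j * y i)) ^ 2) := by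
  have swap : ∀ f : I → I → ℝ,
      ∑ i, ∑ j ∈ Finset.univ.erase i, f i j
        = ∑ i, ∑ j ∈ Finset.univ.erase i, f j i := by
    intro f
    rw [Finset.sum_comm' (s' := fun j => Finset.univ.erase j) (t' := Finset.univ)]
    intro i j
    simp [eq_comm, ne_comm]
  -- cross term rewriting: product of sqrts
  have hsqrt : ∀ i j : I,
      Real.sqrt (x i * y j) * Real.sqrt (x j * y i)
        = Real.sqrt (x i * y i * (x j * y j)) := by
    intro i j
    rw [← Real.sqrt_mul (mul_nonneg (hx i) (hy j))]
    congr 1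
    ring
  have key : (∑ i, ∑ j ∈ Finset.univ.erase i, (G i j) ^ 2 * x i * y j * (ρ i) ^ 2)
        + (∑ i, ∑ j ∈ Finset.univ.erase i, G i j * G j i *
            ρ i * ρ j * Real.sqrt (x i * y i * (x j * y j)))
      = (1 / 2) * ∑ i, ∑ j ∈ Finset.univ.erase i,
          (G i j * ρ i * Real.sqrt (x i * y j)
            + G j i * ρ j * Real.sqrt (x j * y i)) ^ 2 := by
    have expand : ∀ i j : I,
        (G i j * ρ i * Real.sqrt (x i * y j)
            + G j i * ρ j * Real.sqrt (x j * y i)) ^ 2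
          = (G i j) ^ 2 * x i * y j * (ρ i) ^ 2
            + (G j i) ^ 2 * x j * y i * (ρ j) ^ 2
            + 2 * (G i j * G j i * ρ i * ρ j * Real.sqrt (x i * y i * (x j * y j))) := by
      intro i j
      have h1 : Real.sqrt (x i * y j) ^ 2 = x i * y j :=
        Real.sq_sqrt (mul_nonneg (hx i) (hy j))
      have h2 : Real.sqrt (x j * y i) ^ 2 = x j * y i :=
        Real.sq_sqrt (mul_nonneg (hx j) (hy i))
      have h3 := hsqrt i j
      linear_combination (G i j * ρ i) ^ 2 * h1 + (G j i * ρ j) ^ 2 * h2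
        + 2 * (G i j * ρ i * G j i * ρ j) * h3
    have : ∑ i, ∑ j ∈ Finset.univ.erase i,
          (G i j * ρ i * Real.sqrt (x i * y j)
            + G j i * ρ j * Real.sqrt (x j * y i)) ^ 2
        = ∑ i, ∑ j ∈ Finset.univ.erase i,
            ((G i j) ^ 2 * x i * y j * (ρ i) ^ 2
            + (G j i) ^ 2 * x j * y i * (ρ j) ^ 2
            + 2 * (G i j * G j i * ρ i * ρ j * Real.sqrt (x i * y i * (x j * y j)))) := by
      exact Finset.sum_congr rfl fun i _ => Finset.sum_congr rfl fun j _ => expand i j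
    rw [this]
    simp only [Finset.sum_add_distrib, ← Finset.mul_sum]
    have hswap := swap (fun i j => (G j i) ^ 2 * x j * y i * (ρ j) ^ 2)
    rw [hswap]
    ring
  refine ⟨?_, key, by positivity⟩
  have hcross : (∑ i, ∑ j ∈ Finset.univ.erase i, G i j * G j i *
              (ρ i * Real.sqrt (x i * y i)) * (ρ j * Real.sqrt (x j * y j)))
      = ∑ i, ∑ j ∈ Finset.univ.erase i, G i j * G j i *
            ρ i * ρ j * Real.sqrt (x i * y i * (x j * y j)) := by
    refine Finset.sum_congr rfl fun i _ => Finset.sum_congr rfl fun j _ => ?_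
    rw [Real.sqrt_mul (mul_nonneg (hx i) (hy i))]
    ring
  have hexp : ∑ i, ∑ j ∈ Finset.univ.erase i, (G i j) ^ 2 * x i * y j * (1 - (ρ i) ^ 2)
      = (∑ i, ∑ j ∈ Finset.univ.erase i, (G i j) ^ 2 * x i * y j)
        - ∑ i, ∑ j ∈ Finset.univ.erase i, (G i j) ^ 2 * x i * y j * (ρ i) ^ 2 := by
    rw [← Finset.sum_sub_distrib]
    refine Finset.sum_congr rfl fun i _ => ?_
    rw [← Finset.sum_sub_distrib]
    exact Finset.sum_congr rfl fun j _ => by ring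
  rw [hexp, hcross]
  have hpos : 0 ≤ (1 / 2) * ∑ i, ∑ j ∈ Finset.univ.erase i,
          (G i j * ρ i * Real.sqrt (x i * y j)
            + G j i * ρ j * Real.sqrt (x j * y i)) ^ 2 := by positivity
  linarith [key, hpos]
end

section
/- Let I be a finite index set, G : I × I → ℝ, a, b : I → ℝ, x, y : I → ℝ, and ρ : I → ℝ. Suppose there exist constants c > 0 and δ ∈ (0, 1] such that x_i ≥ c, y_i ≥ c, and |ρ_i| ≤ 1 − δ for all i. Define V := Σ_i ( x_i a_i² + 2 ρ_i √(x_i y_i) a_i b_i + y_i b_i² ) + Σ_i Σ_{j≠i} G_{ij}² x_i y_j + Σ_i Σ_{j≠i} G_{ij} G_{ji} · ρ_i √(x_i y_i) · ρ_j √(x_j y_j). Then V ≥ δ·c·Σ_i (a_i² + b_i²) + δ(2−δ)·c²·Σ_i Σ_{j≠i} G_{ij}². -/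
open Finset

private lemma swap_sum {I : Type*} [Fintype I] [DecidableEq I] (f : I → I → ℝ) :
    ∑ i, ∑ j ∈ Finset.univ.erase i, f i j = ∑ i, ∑ j ∈ Finset.univ.erase i, f j i := by
  rw [Finset.sum_comm' (s' := fun j => Finset.univ.erase j) (t' := Finset.univ)]
  intro i j
  simp [Finset.mem_erase, eq_comm, and_comm]

private lemma ptA (xi yi ρi ai bi c δ : ℝ) (hc : 0 < c) (hδ0 : 0 < δ) (hδ1 : δ ≤ 1)
    (hx : c ≤ xi) (hy : c ≤ yi) (hρ : |ρi| ≤ 1 - δ) :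
    δ * c * (ai ^ 2 + bi ^ 2) ≤
      xi * ai ^ 2 + 2 * ρi * Real.sqrt (xi * yi) * ai * bi + yi * bi ^ 2 := by
  have hx0 : (0:ℝ) ≤ xi := le_trans hc.le hx
  have hy0 : (0:ℝ) ≤ yi := le_trans hc.le hy
  have hu2 : Real.sqrt xi ^ 2 = xi := Real.sq_sqrt hx0
  have hv2 : Real.sqrt yi ^ 2 = yi := Real.sq_sqrt hy0
  have hs : Real.sqrt (xi * yi) = Real.sqrt xi * Real.sqrt yi := Real.sqrt_mul hx0 yi
  set u := Real.sqrt xi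
  set v := Real.sqrt yi
  rw [hs]
  have hxu : c ≤ u ^ 2 := hu2 ▸ hx
  have hyv : c ≤ v ^ 2 := hv2 ▸ hy
  have key : δ * c * (ai ^ 2 + bi ^ 2) ≤
      u ^ 2 * ai ^ 2 + 2 * ρi * (u * v) * ai * bi + v ^ 2 * bi ^ 2 := by
    have h1 := abs_le.mp hρ
    nlinarith [mul_nonneg (by linarith [h1.2] : (0:ℝ) ≤ 1 - δ - ρi) (sq_nonneg (u*ai - v*bi)),
      mul_nonneg (by linarith [h1.1] : (0:ℝ) ≤ 1 - δ + ρi) (sq_nonneg (u*ai + v*bi)),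
      mul_nonneg (mul_nonneg hδ0.le (by linarith : (0:ℝ) ≤ u^2 - c)) (sq_nonneg ai),
      mul_nonneg (mul_nonneg hδ0.le (by linarith : (0:ℝ) ≤ v^2 - c)) (sq_nonneg bi)]
  calc δ * c * (ai ^ 2 + bi ^ 2)
      ≤ u ^ 2 * ai ^ 2 + 2 * ρi * (u * v) * ai * bi + v ^ 2 * bi ^ 2 := key
    _ = xi * ai ^ 2 + 2 * ρi * (u * v) * ai * bi + yi * bi ^ 2 := by rw [hu2, hv2]

private lemma ptB (g h x1 y1 x2 y2 ρ1 ρ2 δ : ℝ)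
    (hx1 : 0 ≤ x1) (hy1 : 0 ≤ y1) (hx2 : 0 ≤ x2) (hy2 : 0 ≤ y2)
    (hρ1 : |ρ1| ≤ 1 - δ) (hρ2 : |ρ2| ≤ 1 - δ) :
    -(g * h * (ρ1 * Real.sqrt (x1 * y1)) * (ρ2 * Real.sqrt (x2 * y2))) ≤
      (1 - δ)^2 / 2 * (g^2 * x1 * y2) + (1 - δ)^2 / 2 * (h^2 * x2 * y1) := by
  have hP : |ρ1 * ρ2| ≤ (1 - δ)^2 := by
    rw [abs_mul]
    calc |ρ1| * |ρ2| ≤ (1-δ) * (1-δ) :=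
          mul_le_mul hρ1 hρ2 (abs_nonneg _) (le_trans (abs_nonneg _) hρ1)
      _ = (1-δ)^2 := (sq (1-δ)).symm
  have hu1 : Real.sqrt x1 ^ 2 = x1 := Real.sq_sqrt hx1
  have hv1 : Real.sqrt y1 ^ 2 = y1 := Real.sq_sqrt hy1
  have hu2 : Real.sqrt x2 ^ 2 = x2 := Real.sq_sqrt hx2
  have hv2 : Real.sqrt y2 ^ 2 = y2 := Real.sq_sqrt hy2
  have hs1 : Real.sqrt (x1 * y1) = Real.sqrt x1 * Real.sqrt y1 := Real.sqrt_mul hx1 y1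
  have hs2 : Real.sqrt (x2 * y2) = Real.sqrt x2 * Real.sqrt y2 := Real.sqrt_mul hx2 y2
  set u1 := Real.sqrt x1; set v1 := Real.sqrt y1
  set u2 := Real.sqrt x2; set v2 := Real.sqrt y2
  rw [hs1, hs2]
  have key : -(g * h * (ρ1 * (u1 * v1)) * (ρ2 * (u2 * v2))) ≤
      (1 - δ)^2 / 2 * (g^2 * u1^2 * v2^2) + (1 - δ)^2 / 2 * (h^2 * u2^2 * v1^2) := by
    have h2 := abs_le.mp hP
    nlinarith [mul_nonneg (by linarith [h2.1] : (0:ℝ) ≤ (1-δ)^2 + ρ1*ρ2) (sq_nonneg (g*u1*v2 + h*u2*v1)),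
      mul_nonneg (by linarith [h2.2] : (0:ℝ) ≤ (1-δ)^2 - ρ1*ρ2) (sq_nonneg (g*u1*v2 - h*u2*v1))]
  calc -(g * h * (ρ1 * (u1 * v1)) * (ρ2 * (u2 * v2)))
      ≤ (1 - δ)^2 / 2 * (g^2 * u1^2 * v2^2) + (1 - δ)^2 / 2 * (h^2 * u2^2 * v1^2) := key
    _ = (1 - δ)^2 / 2 * (g^2 * x1 * y2) + (1 - δ)^2 / 2 * (h^2 * x2 * y1) := by
        rw [hu1, hv1, hu2, hv2]

/-- lower bound on the LM variance `V_LM`: if `x_i, y_i ≥ c > 0`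
and `|ρ_i| ≤ 1 − δ` with `δ ∈ (0,1]`, then
`V ≥ δ·c·Σ_i(a_i² + b_i²) + δ(2−δ)·c²·Σ_{i≠j}G_{ij}²`, where
`V = Σ_i(x_ia_i² + 2ρ_i√(x_iy_i)a_ib_i + y_ib_i²) + Σ_{i≠j}G_{ij}²x_iy_j
  + Σ_{i≠j}G_{ij}G_{ji}·ρ_i√(x_iy_i)·ρ_j√(x_jy_j)`. -/
theorem stmt_15 {I : Type*} [Fintype I] [DecidableEq I]
    (G : I → I → ℝ) (a b x y ρ : I → ℝ) (c δ : ℝ)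
    (hc : 0 < c) (hδ0 : 0 < δ) (hδ1 : δ ≤ 1)
    (hx : ∀ i, c ≤ x i) (hy : ∀ i, c ≤ y i) (hρ : ∀ i, |ρ i| ≤ 1 - δ) :
    δ * c * (∑ i, ((a i) ^ 2 + (b i) ^ 2))
        + δ * (2 - δ) * c ^ 2 * ∑ i, ∑ j ∈ Finset.univ.erase i, (G i j) ^ 2
      ≤ (∑ i, (x i * (a i) ^ 2
            + 2 * ρ i * Real.sqrt (x i * y i) * a i * b i + y i * (b i) ^ 2))
        + (∑ i, ∑ j ∈ Finset.univ.erase i, (G i j) ^ 2 * x i * y j)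
        + ∑ i, ∑ j ∈ Finset.univ.erase i, G i j * G j i *
            (ρ i * Real.sqrt (x i * y i)) * (ρ j * Real.sqrt (x j * y j)) := by
  have hx0 : ∀ i, (0:ℝ) ≤ x i := fun i => le_trans hc.le (hx i)
  have hy0 : ∀ i, (0:ℝ) ≤ y i := fun i => le_trans hc.le (hy i)
  set S0 := ∑ i, ∑ j ∈ Finset.univ.erase i, (G i j) ^ 2 with hS0
  set S1 := ∑ i, ∑ j ∈ Finset.univ.erase i, (G i j) ^ 2 * x i * y j with hS1
  set A := ∑ i, (x i * (a i) ^ 2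
            + 2 * ρ i * Real.sqrt (x i * y i) * a i * b i + y i * (b i) ^ 2) with hA
  set C := ∑ i, ∑ j ∈ Finset.univ.erase i, G i j * G j i *
            (ρ i * Real.sqrt (x i * y i)) * (ρ j * Real.sqrt (x j * y j)) with hC
  -- Part A
  have hAle : δ * c * (∑ i, ((a i) ^ 2 + (b i) ^ 2)) ≤ A := by
    rw [hA, Finset.mul_sum]
    exact Finset.sum_le_sum fun i _ =>
      ptA (x i) (y i) (ρ i) (a i) (b i) c δ hc hδ0 hδ1 (hx i) (hy i) (hρ i)
  -- cross term lower bound : -C ≤ (1-δ)^2 * S1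
  have hsw : ∑ i, ∑ j ∈ Finset.univ.erase i, (1 - δ)^2 / 2 * ((G j i)^2 * x j * y i)
      = ∑ i, ∑ j ∈ Finset.univ.erase i, (1 - δ)^2 / 2 * ((G i j)^2 * x i * y j) :=
    swap_sum _
  have half : ∑ i, ∑ j ∈ Finset.univ.erase i, (1 - δ)^2 / 2 * ((G i j)^2 * x i * y j)
      = (1 - δ)^2 / 2 * S1 := by
    rw [hS1, Finset.mul_sum]
    refine Finset.sum_congr rfl fun i _ => ?_
    rw [Finset.mul_sum]
  have hCle : -C ≤ (1 - δ)^2 * S1 := by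
    have hnegC : -C = ∑ i, ∑ j ∈ Finset.univ.erase i, -(G i j * G j i *
        (ρ i * Real.sqrt (x i * y i)) * (ρ j * Real.sqrt (x j * y j))) := by
      rw [hC]
      simp [Finset.sum_neg_distrib]
    have hbound : ∑ i, ∑ j ∈ Finset.univ.erase i, -(G i j * G j i *
          (ρ i * Real.sqrt (x i * y i)) * (ρ j * Real.sqrt (x j * y j)))
        ≤ ∑ i, ∑ j ∈ Finset.univ.erase i,
            ((1 - δ)^2 / 2 * ((G i j)^2 * x i * y j)
              + (1 - δ)^2 / 2 * ((G j i)^2 * x j * y i)) := by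
      refine Finset.sum_le_sum fun i _ => Finset.sum_le_sum fun j _ => ?_
      have := ptB (G i j) (G j i) (x i) (y i) (x j) (y j) (ρ i) (ρ j) δ
        (hx0 i) (hy0 i) (hx0 j) (hy0 j) (hρ i) (hρ j)
      calc -(G i j * G j i * (ρ i * Real.sqrt (x i * y i)) * (ρ j * Real.sqrt (x j * y j)))
          ≤ (1 - δ)^2 / 2 * ((G i j)^2 * (x i) * (y j))
            + (1 - δ)^2 / 2 * ((G j i)^2 * (x j) * (y i)) := by
            convert this using 3 <;> ring
        _ = (1 - δ)^2 / 2 * ((G i j)^2 * x i * y j)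
            + (1 - δ)^2 / 2 * ((G j i)^2 * x j * y i) := by ring
    have hsplit : ∑ i, ∑ j ∈ Finset.univ.erase i,
        ((1 - δ)^2 / 2 * ((G i j)^2 * x i * y j)
          + (1 - δ)^2 / 2 * ((G j i)^2 * x j * y i)) = (1 - δ)^2 * S1 := by
      simp only [Finset.sum_add_distrib]
      rw [hsw, half]
      ring
    linarith [hnegC ▸ (hsplit ▸ hbound)]
  -- S1 ≥ c^2 S0
  have hS1ge : c^2 * S0 ≤ S1 := by
    rw [hS0, hS1, Finset.mul_sum]
    refine Finset.sum_le_sum fun i _ => ?_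
    rw [Finset.mul_sum]
    refine Finset.sum_le_sum fun j _ => ?_
    nlinarith [mul_nonneg (mul_nonneg (by linarith [hx i] : (0:ℝ) ≤ x i - c) (hy0 j)) (sq_nonneg (G i j)),
      mul_nonneg (mul_nonneg hc.le (by linarith [hy j] : (0:ℝ) ≤ y j - c)) (sq_nonneg (G i j))]
  have hS0nn : (0:ℝ) ≤ S0 := by
    rw [hS0]
    exact Finset.sum_nonneg fun i _ => Finset.sum_nonneg fun j _ => sq_nonneg _
  nlinarith [hAle, hCle, hS1ge, hS0nn,
    mul_nonneg (mul_nonneg hδ0.le (by linarith : (0:ℝ) ≤ 2 - δ)) (by linarith : (0:ℝ) ≤ S1 - c^2 * S0)]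
end

section
/- Work on a probability space with a finite index set I of size n. For each i ∈ I, let ν_i and η_i be real random variables with E[ν_i] = 0, E[η_i] = 0, and E[ν_i²] < ∞, E[η_i²] < ∞, and assume the family of ℝ²-valued random variables ((ν_i, η_i))_{i∈I} is mutually independent across i. Let R, R_Δ : I → ℝ, let P be an n×n real matrix satisfying Σ_{j≠i} P_{ij} R(j) = M_{ii} R(i) for all i, where M_{ii} := 1 − P_{ii}, and set e_i := R_Δ(i) + ν_i, X_i := R(i) + η_i, and X̃_i := Σ_{j≠i} P_{ij} X_j. Then E[ Σ_i X̃_i² e_i² ] = Σ_i ( M_{ii}² R(i)² R_Δ(i)² + Σ_{j≠i} P_{ij}² R_Δ(i)² E[η_j²] + M_{ii}² R(i)² E[ν_i²] + Σ_{j≠i} P_{ij}² E[ν_i²] E[η_j²] ). -/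
open Finset MeasureTheory ProbabilityTheory

/-- Second moment of an affine combination of independent mean-zero L² variables. -/
lemma aux_sq_int {Ω : Type*} {I : Type*} [DecidableEq I]
    [MeasurableSpace Ω] (μ : Measure Ω) [IsProbabilityMeasure μ]
    (η : I → Ω → ℝ) (hmeas : ∀ i, Measurable (η i))
    (h2 : ∀ i, MemLp (η i) 2 μ) (hmean : ∀ i, ∫ ω, η i ω ∂μ = 0)
    (hpind : ∀ j k, j ≠ k → IndepFun (η j) (η k) μ)
    (s : Finset I) (a : ℝ) (b : I → ℝ) :
    ∫ ω, (a + ∑ j ∈ s, b j * η j ω) ^ 2 ∂μ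
      = a ^ 2 + ∑ j ∈ s, (b j) ^ 2 * ∫ ω, (η j ω) ^ 2 ∂μ := by
  have hint : ∀ j, Integrable (η j) μ := fun j => (h2 j).integrable (by norm_num)
  have hcross : ∀ j k, Integrable (fun ω => (b j * b k) * (η j ω * η k ω)) μ := by
    intro j k
    by_cases hjk : j = k
    · subst hjk
      have := (h2 j).integrable_sq
      simpa [sq] using this.const_mul (b j * b j)
    · exact ((hpind j k hjk).integrable_mul (hint j) (hint k)).const_mul _
  have hpt : ∀ ω, (a + ∑ j ∈ s, b j * η j ω) ^ 2
      = a ^ 2 + ((∑ j ∈ s, 2 * a * b j * η j ω)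
        + ∑ j ∈ s, ∑ k ∈ s, (b j * b k) * (η j ω * η k ω)) := by
    intro ω
    have h1 : (∑ j ∈ s, b j * η j ω) ^ 2
        = ∑ j ∈ s, ∑ k ∈ s, (b j * b k) * (η j ω * η k ω) := by
      rw [sq, Finset.sum_mul_sum]
      exact Finset.sum_congr rfl fun j _ => Finset.sum_congr rfl fun k _ => by ring
    have h2' : 2 * a * (∑ j ∈ s, b j * η j ω) = ∑ j ∈ s, 2 * a * b j * η j ω := by
      rw [Finset.mul_sum]
      exact Finset.sum_congr rfl fun j _ => by ring
    calc (a + ∑ j ∈ s, b j * η j ω) ^ 2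
        = a ^ 2 + (2 * a * (∑ j ∈ s, b j * η j ω) + (∑ j ∈ s, b j * η j ω) ^ 2) := by ring
      _ = _ := by rw [h1, h2']
  have hi1 : Integrable (fun ω => ∑ j ∈ s, 2 * a * b j * η j ω) μ :=
    integrable_finset_sum _ fun j _ => by
      simpa [mul_assoc] using (hint j).const_mul (2 * a * b j)
  have hi2 : Integrable (fun ω => ∑ j ∈ s, ∑ k ∈ s, (b j * b k) * (η j ω * η k ω)) μ :=
    integrable_finset_sum _ fun j _ => integrable_finset_sum _ fun k _ => hcross j k
  simp only [hpt]
  have hiadd : Integrable (fun ω => (∑ j ∈ s, 2 * a * b j * η j ω)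
      + ∑ j ∈ s, ∑ k ∈ s, (b j * b k) * (η j ω * η k ω)) μ := hi1.add hi2
  rw [integral_add (integrable_const _) hiadd]
  rw [integral_add hi1 hi2]
  rw [integral_const, integral_finset_sum _ (fun j (_ : j ∈ s) => by
      simpa [mul_assoc] using (hint j).const_mul (2 * a * b j) :
      ∀ j ∈ s, Integrable (fun ω => 2 * a * b j * η j ω) μ),
    integral_finset_sum _ (fun j _ => integrable_finset_sum _ fun k _ => hcross j k)]
  have hz : ∑ j ∈ s, ∫ ω, 2 * a * b j * η j ω ∂μ = 0 := by
    refine Finset.sum_eq_zero fun j _ => ?_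
    rw [integral_const_mul, hmean j, mul_zero]
  have hdiag : ∀ j ∈ s, (∫ ω, ∑ k ∈ s, (b j * b k) * (η j ω * η k ω) ∂μ)
      = (b j) ^ 2 * ∫ ω, (η j ω) ^ 2 ∂μ := by
    intro j hj
    rw [integral_finset_sum _ fun k _ => hcross j k]
    rw [Finset.sum_eq_single j]
    · rw [integral_const_mul]
      congr 1
      · ring
      · exact integral_congr_ae (Filter.Eventually.of_forall fun ω => (sq (η j ω)).symm)
    · intro k _ hkj
      rw [integral_const_mul]
      have : ∫ ω, η j ω * η k ω ∂μ = (∫ ω, η j ω ∂μ) * ∫ ω, η k ω ∂μ :=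
        (hpind j k (Ne.symm hkj)).integral_fun_mul_eq_mul_integral (hint j).aestronglyMeasurable (hint k).aestronglyMeasurable
      rw [this, hmean j, zero_mul, mul_zero]
    · intro h; exact absurd hj h
  rw [hz, Finset.sum_congr rfl hdiag]
  simp [measure_univ]

/-- expectation of the leading term of the constructed-instrument
Anderson–Rubin variance estimator: with `X̃_i = Σ_{j≠i}P_{ij}X_j`,
`E[Σ_i X̃_i² e_i²] = Σ_i ( M_{ii}²R(i)²R_Δ(i)² + Σ_{j≠i}P_{ij}²R_Δ(i)²E[η_j²]
  + M_{ii}²R(i)²E[ν_i²] + Σ_{j≠i}P_{ij}²E[ν_i²]E[η_j²] )`,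
where `e_i = R_Δ(i) + ν_i`, `X_i = R(i) + η_i`, `M_{ii} = 1 − P_{ii}`, the
mean-zero square-integrable errors are independent across observations, and
`Σ_{j≠i}P_{ij}R(j) = (1−P_{ii})R(i)`. -/
theorem stmt_18 {Ω : Type*} {I : Type*} [Fintype I] [DecidableEq I]
    [MeasurableSpace Ω] (μ : Measure Ω) [IsProbabilityMeasure μ]
    (ν η : I → Ω → ℝ)
    (hmeas : ∀ i, Measurable (fun ω => (ν i ω, η i ω)))
    (hν2 : ∀ i, MemLp (ν i) 2 μ) (hη2 : ∀ i, MemLp (η i) 2 μ)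
    (hνmean : ∀ i, ∫ ω, ν i ω ∂μ = 0) (hηmean : ∀ i, ∫ ω, η i ω ∂μ = 0)
    (hindep : iIndepFun
      (fun i ω => (ν i ω, η i ω)) μ)
    (RΔ R : I → ℝ) (P : I → I → ℝ)
    (hPR : ∀ i, ∑ j ∈ Finset.univ.erase i, P i j * R j = (1 - P i i) * R i) :
    ∫ ω, (∑ i, (∑ j ∈ Finset.univ.erase i, P i j * (R j + η j ω)) ^ 2 *
        (RΔ i + ν i ω) ^ 2) ∂μ
      = ∑ i, ((1 - P i i) ^ 2 * R i ^ 2 * RΔ i ^ 2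
          + (∑ j ∈ Finset.univ.erase i,
              (P i j) ^ 2 * RΔ i ^ 2 * (∫ ω, (η j ω) ^ 2 ∂μ))
          + (1 - P i i) ^ 2 * R i ^ 2 * (∫ ω, (ν i ω) ^ 2 ∂μ)
          + ∑ j ∈ Finset.univ.erase i,
              (P i j) ^ 2 * (∫ ω, (ν i ω) ^ 2 ∂μ) * (∫ ω, (η j ω) ^ 2 ∂μ)) := by
  have hνmeas : ∀ i, Measurable (ν i) := fun i => (hmeas i).fst
  have hηmeas : ∀ i, Measurable (η i) := fun i => (hmeas i).snd
  have hηind : ∀ j k, j ≠ k → IndepFun (η j) (η k) μ := fun j k hjk =>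
    (hindep.indepFun hjk).comp measurable_snd measurable_snd
  have hνind : ∀ j k, j ≠ k → IndepFun (ν j) (ν k) μ := fun j k hjk =>
    (hindep.indepFun hjk).comp measurable_fst measurable_fst
  have hXteq : ∀ (i : I) (ω : Ω),
      (∑ j ∈ Finset.univ.erase i, P i j * (R j + η j ω))
        = (1 - P i i) * R i + ∑ j ∈ Finset.univ.erase i, P i j * η j ω := by
    intro i ω
    rw [← hPR i, ← Finset.sum_add_distrib]
    exact Finset.sum_congr rfl fun j _ => by ring
  -- second moments
  have hval1 : ∀ i, ∫ ω, ((1 - P i i) * R i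
        + ∑ j ∈ Finset.univ.erase i, P i j * η j ω) ^ 2 ∂μ
      = ((1 - P i i) * R i) ^ 2
        + ∑ j ∈ Finset.univ.erase i, (P i j) ^ 2 * ∫ ω, (η j ω) ^ 2 ∂μ :=
    fun i => aux_sq_int μ η hηmeas hη2 hηmean hηind _ _ _
  have hval2 : ∀ i, ∫ ω, (RΔ i + ν i ω) ^ 2 ∂μ
      = (RΔ i) ^ 2 + ∫ ω, (ν i ω) ^ 2 ∂μ := by
    intro i
    have := aux_sq_int μ ν hνmeas hν2 hνmean hνind {i} (RΔ i) (fun _ => 1)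
    simpa using this
  -- integrability of squares
  have memX : ∀ i, MemLp (fun ω => (1 - P i i) * R i
      + ∑ j ∈ Finset.univ.erase i, P i j * η j ω) 2 μ := fun i =>
    (memLp_const ((1 - P i i) * R i)).add (memLp_finset_sum (Finset.univ.erase i) fun j _ => (hη2 j).const_mul (P i j))
  have sq1 : ∀ i, Integrable (fun ω => ((1 - P i i) * R i
      + ∑ j ∈ Finset.univ.erase i, P i j * η j ω) ^ 2) μ := fun i =>
    (memX i).integrable_sq
  have sq2 : ∀ i, Integrable (fun ω => (RΔ i + ν i ω) ^ 2) μ := fun i =>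
    ((memLp_const (RΔ i)).add (hν2 i)).integrable_sq
  -- independence of the two squares
  have hInd : ∀ i, IndepFun
      (fun ω => ((1 - P i i) * R i + ∑ j ∈ Finset.univ.erase i, P i j * η j ω) ^ 2)
      (fun ω => (RΔ i + ν i ω) ^ 2) μ := by
    intro i
    have base := hindep.indepFun_finset (Finset.univ.erase i) {i} (by simp) hmeas
    set g1 : ({x : I // x ∈ Finset.univ.erase i} → ℝ × ℝ) → ℝ :=
      fun v => ((1 - P i i) * R i
        + ∑ j : {x : I // x ∈ Finset.univ.erase i}, P i j.1 * (v j).2) ^ 2 with hg1def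
    set g2 : ({x : I // x ∈ ({i} : Finset I)} → ℝ × ℝ) → ℝ :=
      fun v => (RΔ i + (v ⟨i, Finset.mem_singleton_self i⟩).1) ^ 2 with hg2def
    have hg1 : Measurable g1 :=
      ((measurable_const.add (Finset.measurable_sum _ fun j _ =>
        ((measurable_pi_apply j).snd.const_mul _))).pow_const 2)
    have hg2 : Measurable g2 :=
      ((measurable_const.add (measurable_pi_apply _).fst).pow_const 2)
    have h := base.comp hg1 hg2
    have e1 : (g1 ∘ (fun ω (j : {x : I // x ∈ Finset.univ.erase i}) => (ν j ω, η j ω)))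
        = fun ω => ((1 - P i i) * R i
          + ∑ j ∈ Finset.univ.erase i, P i j * η j ω) ^ 2 := by
      funext ω
      simp only [Function.comp, hg1def]
      rw [Finset.sum_coe_sort (Finset.univ.erase i) (fun j => P i j * η j ω)]
    have e2 : (g2 ∘ (fun ω (j : {x : I // x ∈ ({i} : Finset I)}) => (ν j ω, η j ω)))
        = fun ω => (RΔ i + ν i ω) ^ 2 := by
      funext ω; simp [hg2def]
    rw [e1, e2] at h
    exact h
  have hprodint : ∀ i, Integrable (fun ω =>
      ((1 - P i i) * R i + ∑ j ∈ Finset.univ.erase i, P i j * η j ω) ^ 2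
        * (RΔ i + ν i ω) ^ 2) μ := fun i =>
    (hInd i).integrable_mul (sq1 i) (sq2 i)
  have hprod : ∀ i, ∫ ω,
      ((1 - P i i) * R i + ∑ j ∈ Finset.univ.erase i, P i j * η j ω) ^ 2
        * (RΔ i + ν i ω) ^ 2 ∂μ
      = (∫ ω, ((1 - P i i) * R i
          + ∑ j ∈ Finset.univ.erase i, P i j * η j ω) ^ 2 ∂μ)
        * ∫ ω, (RΔ i + ν i ω) ^ 2 ∂μ := fun i =>
    (hInd i).integral_fun_mul_eq_mul_integral (sq1 i).aestronglyMeasurable (sq2 i).aestronglyMeasurable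
  simp only [hXteq]
  rw [integral_finset_sum _ fun i _ => hprodint i]
  refine Finset.sum_congr rfl fun i _ => ?_
  rw [hprod i, hval1 i, hval2 i]
  have e1 : (∑ j ∈ Finset.univ.erase i, (P i j) ^ 2 * ∫ ω, (η j ω) ^ 2 ∂μ) * RΔ i ^ 2
      = ∑ j ∈ Finset.univ.erase i, (P i j) ^ 2 * RΔ i ^ 2 * ∫ ω, (η j ω) ^ 2 ∂μ := by
    rw [Finset.sum_mul]; exact Finset.sum_congr rfl fun j _ => by ring
  have e2 : (∑ j ∈ Finset.univ.erase i, (P i j) ^ 2 * ∫ ω, (η j ω) ^ 2 ∂μ)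
        * ∫ ω, (ν i ω) ^ 2 ∂μ
      = ∑ j ∈ Finset.univ.erase i,
          (P i j) ^ 2 * (∫ ω, (ν i ω) ^ 2 ∂μ) * ∫ ω, (η j ω) ^ 2 ∂μ := by
    rw [Finset.sum_mul]; exact Finset.sum_congr rfl fun j _ => by ring
  rw [add_mul, mul_add, mul_add, e1, e2]
  ring
end
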